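/- Let f : ℝⁿ → ℝⁿ be strongly monotone with modulus μ_f > 0, let q be proper convex lsc, γ > 0, λ = 1/γ, and let x^{(k+1)} = T^{DR}_λ(x^{(k)}) be Douglas–Rachford iterates. Then ‖u_{γ}(x^{(k+1)})‖² ≤ ⟨u_γ(x^{(k+1)}), u_γ(x^{(k)})⟩ − λ⟨f(x^{(k+1)}) − f(x^{(k)}), x^{(k+1)} − x^{(k)}⟩, and consequently ‖u_γ(x^{(k+1)})‖ < ‖u_γ(x^{(k)})‖ whenever x^{(k+1)} ≠ x^{(k)}. -/

import Mathlib

/-! The minimiser of the proximal subproblem at `x` is `u = Jq (x - λ f x) - x`: the resolvent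
equation says that `-(γ u + f x)` is a subgradient of `q` at `x + u`, and the objective grows
like `(γ/2)‖w - u‖²` away from such a point. The Douglas–Rachford step then reads
`u = (x' - x) + λ (f x' - f x)`, and monotonicity of `∂q` at the two resolvent points `x + u`,
`x' + u'` is, after this substitution, exactly the residual inequality. When `x' ≠ x`, strong
monotonicity of `f` makes the correction term positive, and Cauchy–Schwarz turns
`‖u'‖² < ⟪u', u⟫` into `‖u'‖ < ‖u‖`. -/

open RealInnerProductSpace Set Filter Topology

variable {H : Type*} [NormedAddCommGroup H] [InnerProductSpace ℝ H]

/-- The convex (Moreau–Rockafellar) subdifferential of an `EReal`-valued function. -/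
noncomputable def subdiff (q : H → EReal) (x : H) : Set H :=
  {v | ∀ y, q x + ((⟪v, y - x⟫ : ℝ) : EReal) ≤ q y}

/-- `q` is proper: finite somewhere, never `-∞`. -/
def ProperFun (q : H → EReal) : Prop := (∃ x, q x ≠ ⊤) ∧ ∀ x, q x ≠ ⊥

/-- `q` is convex: its epigraph is a convex set. -/
def ConvexFun (q : H → EReal) : Prop := Convex ℝ {p : H × ℝ | q p.1 ≤ (p.2 : EReal)}

/-- The objective of the proximal subproblem `u ↦ (γ/2)‖u‖² + ⟨f(x),u⟩ + q(x+u)`. -/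
noncomputable def proxObj (f : H → H) (q : H → EReal) (γ : ℝ) (x u : H) : EReal :=
  ((γ / 2 * ‖u‖ ^ 2 + ⟪f x, u⟫ : ℝ) : EReal) + q (x + u)

theorem ProperFun.ne_top_of_mem_subdiff {q : H → EReal} (hq : ProperFun q) {x v : H}
    (hv : v ∈ subdiff q x) : q x ≠ ⊤ := by
  obtain ⟨y, hy⟩ := hq.1
  intro htop
  have hy_top := hv y
  rw [htop, EReal.top_add_coe, top_le_iff] at hy_top
  exact hy hy_top

theorem ProperFun.exists_eq_coe_of_mem_subdiff {q : H → EReal} (hq : ProperFun q) {x v : H}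
    (hv : v ∈ subdiff q x) : ∃ a : ℝ, q x = a :=
  ⟨(q x).toReal, (EReal.coe_toReal (hq.ne_top_of_mem_subdiff hv) (hq.2 x)).symm⟩

theorem inner_sub_subdiff_nonneg {q : H → EReal} (hq : ProperFun q) {x x' v v' : H}
    (hv : v ∈ subdiff q x) (hv' : v' ∈ subdiff q x') : 0 ≤ ⟪v' - v, x' - x⟫ := by
  obtain ⟨a, ha⟩ := hq.exists_eq_coe_of_mem_subdiff hv
  obtain ⟨a', ha'⟩ := hq.exists_eq_coe_of_mem_subdiff hv'
  have h := hv x'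
  have h' := hv' x
  rw [ha, ha', ← EReal.coe_add, EReal.coe_le_coe_iff] at h h'
  rw [← neg_sub x' x, inner_neg_right] at h'
  rw [inner_sub_left]
  linarith

theorem smul_sub_resolvent_mem_subdiff {q : H → EReal} {γ : ℝ} (hγ : γ ≠ 0) {J : H → H}
    (hJ : ∀ z, ∃ v ∈ subdiff q (J z), z = J z + (1 / γ) • v) (z : H) :
    γ • (z - J z) ∈ subdiff q (J z) := by
  obtain ⟨v, hv, hz⟩ := hJ z
  rwa [sub_eq_iff_eq_add'.mpr hz, smul_smul, mul_one_div_cancel hγ, one_smul]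

theorem inner_sub_resolvent_nonneg {q : H → EReal} (hq : ProperFun q) {γ : ℝ} (hγ : 0 < γ)
    {J : H → H} (hJ : ∀ z, ∃ v ∈ subdiff q (J z), z = J z + (1 / γ) • v) (z z' : H) :
    0 ≤ ⟪(z' - J z') - (z - J z), J z' - J z⟫ := by
  have h := inner_sub_subdiff_nonneg hq (smul_sub_resolvent_mem_subdiff hγ.ne' hJ z)
    (smul_sub_resolvent_mem_subdiff hγ.ne' hJ z')
  rw [← smul_sub, inner_smul_left, RCLike.conj_to_real] at h
  exact nonneg_of_mul_nonneg_right h hγ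

theorem proxObj_add_sq_le {f : H → H} {q : H → EReal} {γ : ℝ} {x u₀ : H}
    (hu₀ : -(γ • u₀ + f x) ∈ subdiff q (x + u₀)) (w : H) :
    proxObj f q γ x u₀ + ((γ / 2 * ‖w - u₀‖ ^ 2 : ℝ) : EReal) ≤ proxObj f q γ x w := by
  have hquad : γ / 2 * ‖u₀‖ ^ 2 + ⟪f x, u₀⟫ + γ / 2 * ‖w - u₀‖ ^ 2 =
      γ / 2 * ‖w‖ ^ 2 + ⟪f x, w⟫ + ⟪-(γ • u₀ + f x), (x + w) - (x + u₀)⟫ := by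
    rw [add_sub_add_left_eq_sub, norm_sub_sq_real]
    simp only [inner_neg_left, inner_add_left, inner_smul_left, inner_sub_right,
      RCLike.conj_to_real, real_inner_self_eq_norm_sq]
    rw [real_inner_comm w u₀]
    ring
  calc proxObj f q γ x u₀ + ((γ / 2 * ‖w - u₀‖ ^ 2 : ℝ) : EReal)
      = ((γ / 2 * ‖w‖ ^ 2 + ⟪f x, w⟫ : ℝ) : EReal) +
          (q (x + u₀) + ((⟪-(γ • u₀ + f x), (x + w) - (x + u₀)⟫ : ℝ) : EReal)) := by
        rw [proxObj, add_right_comm, ← EReal.coe_add, hquad, EReal.coe_add]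
        abel
    _ ≤ proxObj f q γ x w := add_le_add le_rfl (hu₀ (x + w))

theorem eq_of_forall_proxObj_le {f : H → H} {q : H → EReal} (hq : ProperFun q) {γ : ℝ}
    (hγ : 0 < γ) {x u u₀ : H} (hu₀ : -(γ • u₀ + f x) ∈ subdiff q (x + u₀))
    (hu : ∀ w, proxObj f q γ x u ≤ proxObj f q γ x w) : u = u₀ := by
  obtain ⟨a, ha⟩ := hq.exists_eq_coe_of_mem_subdiff hu₀
  have h := (proxObj_add_sq_le hu₀ u).trans (hu u₀)
  rw [proxObj, ha, ← EReal.coe_add, ← EReal.coe_add, EReal.coe_le_coe_iff] at h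
  have hsq : ‖u - u₀‖ ^ 2 ≤ 0 := by nlinarith
  rw [← sub_eq_zero, ← norm_eq_zero]
  exact pow_eq_zero_iff two_ne_zero |>.mp (le_antisymm hsq (sq_nonneg _))

theorem add_eq_resolvent_of_forall_proxObj_le {f : H → H} {q : H → EReal} (hq : ProperFun q)
    {γ : ℝ} (hγ : 0 < γ) {J : H → H} (hJ : ∀ z, ∃ v ∈ subdiff q (J z), z = J z + (1 / γ) • v)
    {x u : H} (hu : ∀ w, proxObj f q γ x u ≤ proxObj f q γ x w) :
    x + u = J (x - (1 / γ) • f x) := by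
  set p := J (x - (1 / γ) • f x)
  have hcrit : -(γ • (p - x) + f x) ∈ subdiff q (x + (p - x)) := by
    rw [add_sub_cancel]
    convert smul_sub_resolvent_mem_subdiff hγ.ne' hJ (x - (1 / γ) • f x) using 1
    rw [smul_sub, smul_sub, smul_sub, smul_smul, mul_one_div_cancel hγ.ne', one_smul]
    abel
  rw [eq_of_forall_proxObj_le hq hγ hcrit hu, add_sub_cancel]

theorem sq_norm_le_inner_add_smul_sub_of_inner_nonneg {a b d : H} {s : ℝ}
    (h : 0 ≤ ⟪d - a, a - s • b⟫) : ‖a‖ ^ 2 ≤ ⟪a, d + s • b⟫ - s * ⟪b, d⟫ := by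
  simp only [inner_sub_left, inner_sub_right, inner_add_right, inner_smul_right,
    real_inner_self_eq_norm_sq] at h ⊢
  rw [real_inner_comm a d, real_inner_comm b d] at h
  linarith

theorem norm_lt_norm_of_sq_le_inner_sub {a b : H} {c : ℝ} (hc : 0 < c)
    (h : ‖a‖ ^ 2 ≤ ⟪a, b⟫ - c) : ‖a‖ < ‖b‖ := by
  have hcs := real_inner_le_norm a b
  by_contra! hba
  nlinarith [mul_le_mul_of_nonneg_left hba (norm_nonneg a)]

theorem DR_residual_inequality_general
    {n : ℕ} (f : EuclideanSpace ℝ (Fin n) → EuclideanSpace ℝ (Fin n))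
    (q : EuclideanSpace ℝ (Fin n) → EReal)
    (hproper : ProperFun q)
    (γ μf : ℝ) (hγ : 0 < γ) (hμf : 0 < μf)
    (hsm : ∀ x₁ x₂, μf * ‖x₂ - x₁‖ ^ 2 ≤ ⟪f x₂ - f x₁, x₂ - x₁⟫)
    (Jf Jq : EuclideanSpace ℝ (Fin n) → EuclideanSpace ℝ (Fin n))
    (hJf : ∀ z, z = Jf z + (1 / γ) • f (Jf z))
    (hJq : ∀ z, ∃ v ∈ subdiff q (Jq z), z = Jq z + (1 / γ) • v)
    (x x' u u' : EuclideanSpace ℝ (Fin n))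
    (hx' : x' = Jf (Jq (x - (1 / γ) • f x) + (1 / γ) • f x))
    (hu : ∀ w, proxObj f q γ x u ≤ proxObj f q γ x w)
    (hu' : ∀ w, proxObj f q γ x' u' ≤ proxObj f q γ x' w) :
    ‖u'‖ ^ 2 ≤ ⟪u', u⟫ - (1 / γ) * ⟪f x' - f x, x' - x⟫ ∧
      (x' ≠ x → ‖u'‖ < ‖u‖) := by
  set s := 1 / γ
  have hp := add_eq_resolvent_of_forall_proxObj_le hproper hγ hJq hu
  have hp' := add_eq_resolvent_of_forall_proxObj_le hproper hγ hJq hu'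
  have hu_eq : u = (x' - x) + s • (f x' - f x) := by
    have h := hJf (Jq (x - s • f x) + s • f x)
    rw [← hx', ← hp] at h
    linear_combination (norm := module) h
  have hmono := inner_sub_resolvent_nonneg hproper hγ hJq (x - s • f x) (x' - s • f x')
  rw [← hp, ← hp'] at hmono
  have hres : ‖u'‖ ^ 2 ≤ ⟪u', u⟫ - s * ⟪f x' - f x, x' - x⟫ := by
    have hgrad_diff : (x' - s • f x' - (x' + u')) - (x - s • f x - (x + u)) = (x' - x) - u' := by
      rw [hu_eq]; module
    have hpt_diff : (x' + u') - (x + u) = u' - s • (f x' - f x) := by rw [hu_eq]; module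
    rw [hgrad_diff, hpt_diff] at hmono
    rw [hu_eq]
    exact sq_norm_le_inner_add_smul_sub_of_inner_nonneg hmono
  refine ⟨hres, fun hne => norm_lt_norm_of_sq_le_inner_sub ?_ hres⟩
  have hd : 0 < ‖x' - x‖ := norm_pos_iff.mpr (sub_ne_zero.mpr hne)
  exact mul_pos (one_div_pos.mpr hγ) ((mul_pos hμf (pow_pos hd 2)).trans_le (hsm x x'))

/-- residual inequality for the Douglas–Rachford iteration:
`‖u_γ(x')‖² ≤ ⟨u_γ(x'), u_γ(x)⟩ − λ⟨f(x')−f(x), x'−x⟩`, and strict residual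
decrease when `x' ≠ x` (with `f` strongly monotone). -/
theorem DR_residual_inequality
    {n : ℕ} (f : EuclideanSpace ℝ (Fin n) → EuclideanSpace ℝ (Fin n))
    (q : EuclideanSpace ℝ (Fin n) → EReal)
    (hf : Continuous f) (hproper : ProperFun q) (hconv : ConvexFun q)
    (hlsc : LowerSemicontinuous q)
    (γ μf : ℝ) (hγ : 0 < γ) (hμf : 0 < μf)
    (hsm : ∀ x₁ x₂, μf * ‖x₂ - x₁‖ ^ 2 ≤ ⟪f x₂ - f x₁, x₂ - x₁⟫)
    (Jf Jq : EuclideanSpace ℝ (Fin n) → EuclideanSpace ℝ (Fin n))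
    (hJf : ∀ z, z = Jf z + (1 / γ) • f (Jf z))
    (hJq : ∀ z, ∃ v ∈ subdiff q (Jq z), z = Jq z + (1 / γ) • v)
    (x x' u u' : EuclideanSpace ℝ (Fin n))
    (hx' : x' = Jf (Jq (x - (1 / γ) • f x) + (1 / γ) • f x))
    (hu : ∀ w, proxObj f q γ x u ≤ proxObj f q γ x w)
    (hu' : ∀ w, proxObj f q γ x' u' ≤ proxObj f q γ x' w) :
    ‖u'‖ ^ 2 ≤ ⟪u', u⟫ - (1 / γ) * ⟪f x' - f x, x' - x⟫ ∧
      (x' ≠ x → ‖u'‖ < ‖u‖) :=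
  DR_residual_inequality_general f q hproper γ μf hγ hμf hsm Jf Jq hJf hJq x x' u u' hx' hu hu'
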